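/- arXiv:math/9911038 — 5 statements merged into one kernel-verified Lean document; each statement's English description precedes it below -/
import Mathlib

section
/- Let E be a real vector space of finite dimension and let V, W be elements of its complexification E^c. Then the complex subspace span_ℂ{V, W} has real index zero if and only if exactly one of the following holds: (a) V = W = 0; (b) span_ℂ{V, W} is one-dimensional and is spanned by a vector of the form X + iZ with X, Z ∈ E linearly independent over ℝ; (c) V and W are linearly independent over ℂ and the four vectors Re V, Im V, Re W, Im W are linearly independent over ℝ. -/
open TensorProduct Complex Submodule Module

/-- The canonical inclusion `E → E^c = ℂ ⊗[ℝ] E` of a real vector space into its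
complexification. -/
noncomputable def cplIncl (E : Type*) [AddCommGroup E] [Module ℝ E] : E →ₗ[ℝ] ℂ ⊗[ℝ] E :=
  TensorProduct.mk ℝ ℂ E 1

/-- The conjugation `V ↦ V̄` of the complexification: the conjugate-linear involution
fixing `E ⊆ E^c`. -/
noncomputable def cplConj (E : Type*) [AddCommGroup E] [Module ℝ E] :
    ℂ ⊗[ℝ] E →ₗ[ℝ] ℂ ⊗[ℝ] E :=
  LinearMap.rTensor E Complex.conjAe.toLinearMap

/-- A complex subspace `S ⊆ E^c` has real index zero if `S ∩ S̄ = 0`, i.e. any `v ∈ S`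
whose conjugate also lies in `S` (equivalently `v ∈ S ∩ S̄`) vanishes. -/
def RealIndexZero {E : Type*} [AddCommGroup E] [Module ℝ E]
    (S : Submodule ℂ (ℂ ⊗[ℝ] E)) : Prop :=
  ∀ v ∈ S, cplConj E v ∈ S → v = 0

/-- Case (a): both vectors vanish. -/
def CaseA {E : Type*} [AddCommGroup E] [Module ℝ E] (V W : ℂ ⊗[ℝ] E) : Prop :=
  V = 0 ∧ W = 0

/-- Case (b): `span_ℂ{V, W}` is one-dimensional and spanned by a vector `X + i Z` with
`X, Z ∈ E` linearly independent over `ℝ`. -/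
def CaseB {E : Type*} [AddCommGroup E] [Module ℝ E] (V W : ℂ ⊗[ℝ] E) : Prop :=
  finrank ℂ (Submodule.span ℂ ({V, W} : Set (ℂ ⊗[ℝ] E))) = 1 ∧
  ∃ X Z : E, LinearIndependent ℝ ![X, Z] ∧
    Submodule.span ℂ ({V, W} : Set (ℂ ⊗[ℝ] E)) =
      Submodule.span ℂ ({cplIncl E X + Complex.I • cplIncl E Z} : Set (ℂ ⊗[ℝ] E))

/-- Case (c): `V, W` are `ℂ`-independent and `Re V, Im V, Re W, Im W` are
`ℝ`-independent. -/
def CaseC {E : Type*} [AddCommGroup E] [Module ℝ E] (V W : ℂ ⊗[ℝ] E) : Prop :=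
  LinearIndependent ℂ ![V, W] ∧
  ∃ X₁ Z₁ X₂ Z₂ : E,
    V = cplIncl E X₁ + Complex.I • cplIncl E Z₁ ∧
    W = cplIncl E X₂ + Complex.I • cplIncl E Z₂ ∧
    LinearIndependent ℝ ![X₁, Z₁, X₂, Z₂]

section AuxRIZ
variable {E : Type*} [AddCommGroup E] [Module ℝ E] {X Z X₁ Z₁ X₂ Z₂ : E}

noncomputable def creal : ℂ ⊗[ℝ] E →ₗ[ℝ] E :=
  TensorProduct.lift ((LinearMap.lsmul ℝ E).comp Complex.reLm)

noncomputable def cimag : ℂ ⊗[ℝ] E →ₗ[ℝ] E :=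
  TensorProduct.lift ((LinearMap.lsmul ℝ E).comp Complex.imLm)

@[simp] lemma creal_tmul (c : ℂ) (x : E) : creal (c ⊗ₜ[ℝ] x) = c.re • x := rfl
@[simp] lemma cimag_tmul (c : ℂ) (x : E) : cimag (c ⊗ₜ[ℝ] x) = c.im • x := rfl

@[simp] lemma cplConj_tmul (c : ℂ) (x : E) :
    cplConj E (c ⊗ₜ[ℝ] x) = (starRingEnd ℂ) c ⊗ₜ[ℝ] x := rfl

@[simp] lemma incl_apply (x : E) : cplIncl E x = (1 : ℂ) ⊗ₜ[ℝ] x := rfl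

@[simp] lemma smul_tmul'' (c a : ℂ) (x : E) : c • (a ⊗ₜ[ℝ] x) = (c * a) ⊗ₜ[ℝ] x := rfl

@[simp] lemma creal_incl (x : E) : creal (cplIncl E x) = x := by simp
@[simp] lemma cimag_incl (x : E) : cimag (cplIncl E x) = 0 := by simp

lemma decomp (v : ℂ ⊗[ℝ] E) : v = cplIncl E (creal v) + Complex.I • cplIncl E (cimag v) := by
  induction v using TensorProduct.induction_on with
  | zero => simp
  | tmul c x =>
      simp only [creal_tmul, cimag_tmul, incl_apply, map_smul, smul_tmul'']
      rw [TensorProduct.smul_tmul', TensorProduct.smul_tmul', smul_tmul'', ← TensorProduct.add_tmul]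
      congr 1
      simp [Complex.ext_iff]
  | add v w hv hw =>
      rw [map_add creal, map_add cimag, map_add, map_add, smul_add]
      conv_lhs => rw [hv, hw]
      abel

lemma creal_smul (e : ℂ) (v : ℂ ⊗[ℝ] E) :
    creal (e • v) = e.re • creal v - e.im • cimag v := by
  induction v using TensorProduct.induction_on with
  | zero => simp
  | tmul c x =>
      rw [smul_tmul'']
      simp only [creal_tmul, cimag_tmul, Complex.mul_re]
      module
  | add v w hv hw =>
      simp only [smul_add, map_add, hv, hw]
      module

lemma cimag_smul (e : ℂ) (v : ℂ ⊗[ℝ] E) :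
    cimag (e • v) = e.im • creal v + e.re • cimag v := by
  induction v using TensorProduct.induction_on with
  | zero => simp
  | tmul c x =>
      rw [smul_tmul'']
      simp only [creal_tmul, cimag_tmul, Complex.mul_im]
      module
  | add v w hv hw =>
      simp only [smul_add, map_add, hv, hw]
      module

@[simp] lemma creal_conj (v : ℂ ⊗[ℝ] E) : creal (cplConj E v) = creal v := by
  induction v using TensorProduct.induction_on with
  | zero => simp
  | tmul c x => simp
  | add v w hv hw => rw [map_add, map_add, hv, hw, map_add]

@[simp] lemma cimag_conj (v : ℂ ⊗[ℝ] E) : cimag (cplConj E v) = -cimag v := by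
  induction v using TensorProduct.induction_on with
  | zero => simp
  | tmul c x => simp
  | add v w hv hw => rw [map_add, map_add, hv, hw, map_add, neg_add]

lemma recim_ext {v w : ℂ ⊗[ℝ] E} (h1 : creal v = creal w) (h2 : cimag v = cimag w) :
    v = w := by
  rw [decomp v, decomp w, h1, h2]

@[simp] lemma incl_eq_zero {x : E} : cplIncl E x = 0 ↔ x = 0 := by
  constructor
  · intro h
    have := congrArg creal h
    simpa using this
  · rintro rfl; simp

lemma conj_decomp (x z : E) :
    cplConj E (cplIncl E x + Complex.I • cplIncl E z) =
      cplIncl E x - Complex.I • cplIncl E z := by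
  apply recim_ext <;>
    simp [map_sub, creal_smul, cimag_smul]

lemma conj_smul (c : ℂ) (v : ℂ ⊗[ℝ] E) :
    cplConj E (c • v) = (starRingEnd ℂ) c • cplConj E v := by
  apply recim_ext
  · rw [creal_conj, creal_smul, creal_smul, creal_conj, cimag_conj]
    simp [smul_neg]
  · rw [cimag_conj, cimag_smul, cimag_smul, creal_conj, cimag_conj]
    simp only [Complex.conj_re, Complex.conj_im, smul_neg, neg_smul, neg_add]

@[simp] lemma conj_incl (x : E) : cplConj E (cplIncl E x) = cplIncl E x := by simp

lemma decomp' (v : ℂ ⊗[ℝ] E) :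
    v = cplIncl E (creal v) + Complex.I • cplIncl E (cimag v) := decomp v

lemma conj_apply (v : ℂ ⊗[ℝ] E) :
    cplConj E v = cplIncl E (creal v) - Complex.I • cplIncl E (cimag v) := by
  conv_lhs => rw [decomp v]
  exact conj_decomp _ _



lemma li2_eq (h : LinearIndependent ℝ ![X, Z]) {a b a' b' : ℝ}
    (he : a • X + b • Z = a' • X + b' • Z) : a = a' ∧ b = b' := by
  have h0 : (a - a') • X + (b - b') • Z = 0 := by
    rw [← sub_eq_zero] at he; linear_combination (norm := module) he
  obtain ⟨h1, h2⟩ := (LinearIndependent.pair_iff.mp h) _ _ h0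
  constructor <;> linarith

lemma li4_eq (h : LinearIndependent ℝ ![X₁, Z₁, X₂, Z₂]) {a b c d a' b' c' d' : ℝ}
    (he : a • X₁ + b • Z₁ + c • X₂ + d • Z₂ = a' • X₁ + b' • Z₁ + c' • X₂ + d' • Z₂) :
    a = a' ∧ b = b' ∧ c = c' ∧ d = d' := by
  have h0 : ∑ i, (![a - a', b - b', c - c', d - d'] i) • (![X₁, Z₁, X₂, Z₂] i) = 0 := by
    simp only [Fin.sum_univ_four]
    rw [← sub_eq_zero] at he
    simp only [Matrix.cons_val_zero, Matrix.cons_val_one, Matrix.head_cons,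
      Matrix.cons_val_two, Matrix.tail_cons, Matrix.cons_val_three]
    linear_combination (norm := module) he
  have := Fintype.linearIndependent_iff.mp h _ h0
  have h1 := this 0; have h2 := this 1; have h3 := this 2; have h4 := this 3
  simp only [Matrix.cons_val_zero, Matrix.cons_val_one, Matrix.head_cons,
    Matrix.cons_val_two, Matrix.tail_cons, Matrix.cons_val_three] at h1 h2 h3 h4
  refine ⟨by linarith, by linarith, by linarith, by linarith⟩



@[simp] lemma creal_mixed (x z : E) :
    creal (cplIncl E x + Complex.I • cplIncl E z) = x := by
  rw [map_add, creal_smul]; simp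

@[simp] lemma cimag_mixed (x z : E) :
    cimag (cplIncl E x + Complex.I • cplIncl E z) = z := by
  rw [map_add, cimag_smul]; simp

lemma rizB {V W : ℂ ⊗[ℝ] E} {X Z : E} (hXZ : LinearIndependent ℝ ![X, Z])
    (hS : Submodule.span ℂ ({V, W} : Set (ℂ ⊗[ℝ] E)) =
      Submodule.span ℂ ({cplIncl E X + Complex.I • cplIncl E Z} : Set (ℂ ⊗[ℝ] E))) :
    RealIndexZero (Submodule.span ℂ ({V, W} : Set (ℂ ⊗[ℝ] E))) := by
  intro v hv hcv
  rw [hS, Submodule.mem_span_singleton] at hv hcv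
  obtain ⟨c, rfl⟩ := hv
  obtain ⟨d, hd⟩ := hcv
  set U := cplIncl E X + Complex.I • cplIncl E Z with hU
  have hre : creal (cplConj E (c • U)) = d.re • X + (-d.im) • Z := by
    rw [← hd, creal_smul]; simp [hU, sub_eq_add_neg]
  have him : cimag (cplConj E (c • U)) = d.im • X + d.re • Z := by
    rw [← hd, cimag_smul]; simp [hU]
  rw [creal_conj, creal_smul] at hre
  rw [cimag_conj, cimag_smul] at him
  simp only [hU, creal_mixed, cimag_mixed] at hre him
  rw [sub_eq_add_neg, ← neg_smul] at hre
  have e1 := li2_eq hXZ hre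
  rw [neg_add, ← neg_smul, ← neg_smul] at him
  have e2 := li2_eq hXZ him
  have : c = 0 := by
    apply Complex.ext <;> simp only [Complex.zero_re, Complex.zero_im] <;>
      [linarith [e1.1, e2.2]; linarith [e1.2, e2.1]]
  rw [this, zero_smul]

lemma rizC {V W : ℂ ⊗[ℝ] E} {X₁ Z₁ X₂ Z₂ : E}
    (h4 : LinearIndependent ℝ ![X₁, Z₁, X₂, Z₂])
    (hV : V = cplIncl E X₁ + Complex.I • cplIncl E Z₁)
    (hW : W = cplIncl E X₂ + Complex.I • cplIncl E Z₂) :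
    RealIndexZero (Submodule.span ℂ ({V, W} : Set (ℂ ⊗[ℝ] E))) := by
  intro v hv hcv
  rw [Submodule.mem_span_pair] at hv hcv
  obtain ⟨a, b, rfl⟩ := hv
  obtain ⟨c, d, hd⟩ := hcv
  have hreV : creal V = X₁ := by rw [hV]; simp
  have himV : cimag V = Z₁ := by rw [hV]; simp
  have hreW : creal W = X₂ := by rw [hW]; simp
  have himW : cimag W = Z₂ := by rw [hW]; simp
  have hre : creal (cplConj E (a • V + b • W)) =
      c.re • X₁ + (-c.im) • Z₁ + d.re • X₂ + (-d.im) • Z₂ := by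
    rw [← hd, map_add, creal_smul, creal_smul, hreV, himV, hreW, himW]
    module
  have him : cimag (cplConj E (a • V + b • W)) =
      c.im • X₁ + c.re • Z₁ + d.im • X₂ + d.re • Z₂ := by
    rw [← hd, map_add, cimag_smul, cimag_smul, hreV, himV, hreW, himW]
    module
  rw [creal_conj, map_add, creal_smul, creal_smul, hreV, himV, hreW, himW] at hre
  rw [cimag_conj, map_add, cimag_smul, cimag_smul, hreV, himV, hreW, himW] at him
  have hre' : a.re • X₁ + (-a.im) • Z₁ + b.re • X₂ + (-b.im) • Z₂ =
      c.re • X₁ + (-c.im) • Z₁ + d.re • X₂ + (-d.im) • Z₂ := by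
    rw [← hre]; module
  have him' : (-a.im) • X₁ + (-a.re) • Z₁ + (-b.im) • X₂ + (-b.re) • Z₂ =
      c.im • X₁ + c.re • Z₁ + d.im • X₂ + d.re • Z₂ := by
    rw [← him]; module
  obtain ⟨p1, p2, p3, p4⟩ := li4_eq h4 hre'
  obtain ⟨q1, q2, q3, q4⟩ := li4_eq h4 him'
  have ha : a = 0 := by apply Complex.ext <;> simp <;> linarith
  have hb : b = 0 := by apply Complex.ext <;> simp <;> linarith
  rw [ha, hb, zero_smul, zero_smul, add_zero]


lemma coe_smul_incl (α : ℝ) (x : E) :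
    (α : ℂ) • cplIncl E x = cplIncl E (α • x) := by
  simp [TensorProduct.tmul_smul, TensorProduct.smul_tmul', Complex.real_smul]

lemma real_fixed_conj {u : ℂ ⊗[ℝ] E} (h : cimag u = 0) : cplConj E u = u := by
  rw [conj_apply, h]
  conv_rhs => rw [decomp u, h]
  simp

lemma li_pair_of_riz_singleton {S : Submodule ℂ (ℂ ⊗[ℝ] E)} {U : ℂ ⊗[ℝ] E}
    (hU : U ∈ S) (hU0 : U ≠ 0) (hriz : ∀ v ∈ S, cplConj E v ∈ S → v = 0) :
    LinearIndependent ℝ ![creal U, cimag U] := by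
  rw [LinearIndependent.pair_iff]
  by_contra hc
  push_neg at hc
  obtain ⟨α, β, hrel, hne⟩ := hc
  set u := (Complex.mk β α) • U with hu
  have hmem : u ∈ S := S.smul_mem _ hU
  have himu : cimag u = 0 := by
    rw [hu, cimag_smul]
    simpa using hrel
  have := hriz u hmem (by rw [real_fixed_conj himu]; exact hmem)
  rw [hu, smul_eq_zero] at this
  rcases this with h | h
  · rw [Complex.ext_iff] at h
    simp at h
    exact hne h.2 h.1
  · exact hU0 h

@[simp] lemma cplConj_conj (v : ℂ ⊗[ℝ] E) : cplConj E (cplConj E v) = v := by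
  apply recim_ext
  · rw [creal_conj, creal_conj]
  · rw [cimag_conj, cimag_conj, neg_neg]

lemma li_incl_four {X₁ Z₁ X₂ Z₂ : E}
    (h : LinearIndependent ℂ ![cplIncl E X₁, cplIncl E Z₁, cplIncl E X₂, cplIncl E Z₂]) :
    LinearIndependent ℝ ![X₁, Z₁, X₂, Z₂] := by
  rw [Fintype.linearIndependent_iff] at h ⊢
  intro g hg
  have : ∑ i, ((g i : ℂ)) • (![cplIncl E X₁, cplIncl E Z₁, cplIncl E X₂, cplIncl E Z₂] i) = 0 := by
    simp only [Fin.sum_univ_four] at hg ⊢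
    simp only [Matrix.cons_val_zero, Matrix.cons_val_one, Matrix.head_cons,
      Matrix.cons_val_two, Matrix.tail_cons, Matrix.cons_val_three] at hg ⊢
    rw [coe_smul_incl, coe_smul_incl, coe_smul_incl, coe_smul_incl,
      ← map_add, ← map_add, ← map_add, hg, map_zero]
  intro i
  exact_mod_cast h (fun i => (g i : ℂ)) this i

lemma li_four_of_riz {V W : ℂ ⊗[ℝ] E}
    (hli : LinearIndependent ℂ ![V, W])
    (hriz : ∀ v ∈ Submodule.span ℂ ({V, W} : Set (ℂ ⊗[ℝ] E)),
      cplConj E v ∈ Submodule.span ℂ ({V, W} : Set (ℂ ⊗[ℝ] E)) → v = 0) :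
    LinearIndependent ℝ ![creal V, cimag V, creal W, cimag W] := by
  have hVdec := decomp V
  have hWdec := decomp W
  have hconjV : cplConj E V = cplIncl E (creal V) - Complex.I • cplIncl E (cimag V) :=
    conj_apply V
  have hconjW : cplConj E W = cplIncl E (creal W) - Complex.I • cplIncl E (cimag W) :=
    conj_apply W
  have h4 : LinearIndependent ℂ ![V, W, cplConj E V, cplConj E W] := by
    by_contra hdep4
    obtain ⟨g, hg, i0, hi0⟩ := Fintype.not_linearIndependent_iff.mp hdep4
    simp only [Fin.sum_univ_four, Matrix.cons_val_zero, Matrix.cons_val_one, Matrix.head_cons,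
      Matrix.cons_val_two, Matrix.tail_cons, Matrix.cons_val_three] at hg
    by_cases hab : g 0 = 0 ∧ g 1 = 0
    · rw [hab.1, hab.2, zero_smul, zero_smul, zero_add, zero_add] at hg
      have := congrArg (cplConj E) hg
      rw [map_add, map_zero, conj_smul, conj_smul, cplConj_conj, cplConj_conj] at this
      obtain ⟨h2, h3⟩ := hli.eq_zero_of_pair this
      rw [map_eq_zero_iff _ (starRingEnd ℂ).injective] at h2 h3
      fin_cases i0
      · exact hi0 hab.1
      · exact hi0 hab.2
      · exact hi0 h2
      · exact hi0 h3
    · have hvmem : g 0 • V + g 1 • W ∈ Submodule.span ℂ ({V, W} : Set (ℂ ⊗[ℝ] E)) :=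
        Submodule.mem_span_pair.mpr ⟨_, _, rfl⟩
      have hvconj : cplConj E (g 0 • V + g 1 • W) ∈
          Submodule.span ℂ ({V, W} : Set (ℂ ⊗[ℝ] E)) := by
        have hveq : g 0 • V + g 1 • W = -(g 2 • cplConj E V + g 3 • cplConj E W) := by
          rw [← sub_eq_zero, ← hg]; abel
        rw [hveq, map_neg, map_add, conj_smul, conj_smul, cplConj_conj, cplConj_conj]
        apply Submodule.neg_mem
        exact Submodule.mem_span_pair.mpr ⟨_, _, rfl⟩
      have hv0 := hriz _ hvmem hvconj
      obtain ⟨h0, h1⟩ := hli.eq_zero_of_pair hv0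
      exact hab ⟨h0, h1⟩
  -- spans agree
  have hspan : Submodule.span ℂ (Set.range ![V, W, cplConj E V, cplConj E W]) =
      Submodule.span ℂ (Set.range
        ![cplIncl E (creal V), cplIncl E (cimag V), cplIncl E (creal W), cplIncl E (cimag W)]) := by
    have hsumV : V + cplConj E V = (2 : ℂ) • cplIncl E (creal V) := by
      apply recim_ext
      · rw [map_add, creal_conj, creal_smul]; simp [two_smul]
      · rw [map_add, cimag_conj, cimag_smul]; simp
    have hdiffV : V - cplConj E V = ((2 : ℂ) * Complex.I) • cplIncl E (cimag V) := by
      apply recim_ext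
      · rw [map_sub, creal_conj, creal_smul]; simp
      · rw [map_sub, cimag_conj, cimag_smul]; simp [two_smul]
    have hsumW : W + cplConj E W = (2 : ℂ) • cplIncl E (creal W) := by
      apply recim_ext
      · rw [map_add, creal_conj, creal_smul]; simp [two_smul]
      · rw [map_add, cimag_conj, cimag_smul]; simp
    have hdiffW : W - cplConj E W = ((2 : ℂ) * Complex.I) • cplIncl E (cimag W) := by
      apply recim_ext
      · rw [map_sub, creal_conj, creal_smul]; simp
      · rw [map_sub, cimag_conj, cimag_smul]; simp [two_smul]
    have key : ∀ (u : ℂ ⊗[ℝ] E) (c : ℂ) (a b : ℂ ⊗[ℝ] E) (S : Submodule ℂ (ℂ ⊗[ℝ] E)),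
        a ∈ S → b ∈ S → a + b = c • u → c ≠ 0 → u ∈ S := by
      intro u c a b S ha hb hab hc
      have : u = c⁻¹ • (a + b) := by rw [hab, smul_smul, inv_mul_cancel₀ hc, one_smul]
      rw [this]; exact S.smul_mem _ (S.add_mem ha hb)
    apply le_antisymm <;> rw [Submodule.span_le] <;> intro u hu <;>
      simp only [Matrix.range_cons, Matrix.range_empty, Set.union_empty,
        Set.union_singleton, Set.mem_insert_iff, Set.mem_singleton_iff] at hu
    · have m1 := Submodule.subset_span (R := ℂ) (s := Set.range
        ![cplIncl E (creal V), cplIncl E (cimag V), cplIncl E (creal W), cplIncl E (cimag W)])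
        (show cplIncl E (creal V) ∈ _ by simp [Matrix.range_cons])
      have m2 := Submodule.subset_span (R := ℂ) (s := Set.range
        ![cplIncl E (creal V), cplIncl E (cimag V), cplIncl E (creal W), cplIncl E (cimag W)])
        (show cplIncl E (cimag V) ∈ _ by simp [Matrix.range_cons])
      have m3 := Submodule.subset_span (R := ℂ) (s := Set.range
        ![cplIncl E (creal V), cplIncl E (cimag V), cplIncl E (creal W), cplIncl E (cimag W)])
        (show cplIncl E (creal W) ∈ _ by simp [Matrix.range_cons])
      have m4 := Submodule.subset_span (R := ℂ) (s := Set.range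
        ![cplIncl E (creal V), cplIncl E (cimag V), cplIncl E (creal W), cplIncl E (cimag W)])
        (show cplIncl E (cimag W) ∈ _ by simp [Matrix.range_cons])
      have gV : V ∈ Submodule.span ℂ (Set.range
          ![cplIncl E (creal V), cplIncl E (cimag V), cplIncl E (creal W), cplIncl E (cimag W)]) := by
        have := Submodule.add_mem _ m1 (Submodule.smul_mem _ Complex.I m2)
        rwa [← hVdec] at this
      have gW : W ∈ Submodule.span ℂ (Set.range
          ![cplIncl E (creal V), cplIncl E (cimag V), cplIncl E (creal W), cplIncl E (cimag W)]) := by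
        have := Submodule.add_mem _ m3 (Submodule.smul_mem _ Complex.I m4)
        rwa [← hWdec] at this
      have gVc : cplConj E V ∈ Submodule.span ℂ (Set.range
          ![cplIncl E (creal V), cplIncl E (cimag V), cplIncl E (creal W), cplIncl E (cimag W)]) := by
        have := Submodule.sub_mem _ m1 (Submodule.smul_mem _ Complex.I m2)
        rwa [← hconjV] at this
      have gWc : cplConj E W ∈ Submodule.span ℂ (Set.range
          ![cplIncl E (creal V), cplIncl E (cimag V), cplIncl E (creal W), cplIncl E (cimag W)]) := by
        have := Submodule.sub_mem _ m3 (Submodule.smul_mem _ Complex.I m4)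
        rwa [← hconjW] at this
      rcases hu with rfl | rfl | rfl | rfl <;>
        first
        | exact gV
        | exact gW
        | exact gVc
        | exact gWc
    · have n1 := Submodule.subset_span (R := ℂ)
        (s := Set.range ![V, W, cplConj E V, cplConj E W])
        (show V ∈ _ by simp [Matrix.range_cons])
      have n2 := Submodule.subset_span (R := ℂ)
        (s := Set.range ![V, W, cplConj E V, cplConj E W])
        (show W ∈ _ by simp [Matrix.range_cons])
      have n3 := Submodule.subset_span (R := ℂ)
        (s := Set.range ![V, W, cplConj E V, cplConj E W])
        (show cplConj E V ∈ _ by simp [Matrix.range_cons])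
      have n4 := Submodule.subset_span (R := ℂ)
        (s := Set.range ![V, W, cplConj E V, cplConj E W])
        (show cplConj E W ∈ _ by simp [Matrix.range_cons])
      rcases hu with rfl | rfl | rfl | rfl <;>
        first
        | exact key _ _ _ _ _ n1 n3 hsumV (by norm_num : (2:ℂ) ≠ 0)
        | exact key _ _ _ _ _ n1 (Submodule.neg_mem _ n3) (by rw [← sub_eq_add_neg]; exact hdiffV)
            (by simp [Complex.ext_iff])
        | exact key _ _ _ _ _ n2 n4 hsumW (by norm_num : (2:ℂ) ≠ 0)
        | exact key _ _ _ _ _ n2 (Submodule.neg_mem _ n4) (by rw [← sub_eq_add_neg]; exact hdiffW)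
            (by simp [Complex.ext_iff])
  have hcard := linearIndependent_iff_card_eq_finrank_span.mp h4
  apply li_incl_four (X₁ := creal V) (Z₁ := cimag V) (X₂ := creal W) (Z₂ := cimag W)
  apply linearIndependent_iff_card_eq_finrank_span.mpr
  rw [Set.finrank, ← hspan]
  rw [Set.finrank] at hcard
  exact hcard

end AuxRIZ


section MainAux
variable {E : Type*} [AddCommGroup E] [Module ℝ E] (V W : ℂ ⊗[ℝ] E)

lemma caseA_notB {V W : ℂ ⊗[ℝ] E} (hA : CaseA V W) : ¬ CaseB V W := by
  rintro ⟨hfr, -⟩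
  rw [hA.1, hA.2] at hfr
  have hset : ({(0 : ℂ ⊗[ℝ] E), 0} : Set (ℂ ⊗[ℝ] E)) = {0} := by simp
  rw [hset, Submodule.span_zero_singleton] at hfr
  simp at hfr

lemma caseA_notC {V W : ℂ ⊗[ℝ] E} (hA : CaseA V W) : ¬ CaseC V W := by
  rintro ⟨hli, -⟩
  exact hli.ne_zero 0 (by simp [hA.1])

lemma caseC_finrank {V W : ℂ ⊗[ℝ] E} (hC : CaseC V W) :
    finrank ℂ (Submodule.span ℂ ({V, W} : Set (ℂ ⊗[ℝ] E))) = 2 := by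
  have h := finrank_span_eq_card hC.1
  have hr : Set.range ![V, W] = ({V, W} : Set (ℂ ⊗[ℝ] E)) := by
    simp only [Matrix.range_cons, Matrix.range_empty, Set.union_empty, Set.union_singleton]
    exact Set.pair_comm W V
  rw [hr] at h
  rw [h]
  simp

lemma caseB_notC {V W : ℂ ⊗[ℝ] E} (hB : CaseB V W) : ¬ CaseC V W := by
  intro hC
  have h2 := caseC_finrank hC
  rw [hB.1] at h2
  omega

lemma span_pair_of_dep {V W : ℂ ⊗[ℝ] E} (hV : V ≠ 0)
    (hdep : ¬ LinearIndependent ℂ ![V, W]) :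
    Submodule.span ℂ ({V, W} : Set (ℂ ⊗[ℝ] E)) = Submodule.span ℂ ({V} : Set (ℂ ⊗[ℝ] E)) := by
  rw [LinearIndependent.pair_iff] at hdep
  push_neg at hdep
  obtain ⟨s, t, heq, hne⟩ := hdep
  have hW : W = (-(t⁻¹ * s)) • V := by
    rcases eq_or_ne t 0 with ht | ht
    · rw [ht, zero_smul, add_zero, smul_eq_zero] at heq
      rcases heq with h | h
      · exact absurd ht (by simpa using hne h)
      · exact absurd h hV
    · have h1 : t • W = -(s • V) := by linear_combination (norm := module) heq
      have h2 : W = t⁻¹ • (t • W) := by rw [smul_smul, inv_mul_cancel₀ ht, one_smul]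
      rw [h2, h1, smul_neg, smul_smul, ← neg_smul]
  apply le_antisymm
  · rw [Submodule.span_le]
    intro u hu
    simp only [Set.mem_insert_iff, Set.mem_singleton_iff] at hu
    rcases hu with rfl | rfl
    · exact Submodule.subset_span rfl
    · rw [hW]
      exact Submodule.smul_mem _ _ (Submodule.subset_span rfl)
  · exact Submodule.span_mono (by simp)

end MainAux

/-- `span_ℂ{V, W}` has real index zero iff exactly one of the cases (a), (b), (c)
holds. -/
theorem realIndexZero_span_pair_iff (E : Type*) [AddCommGroup E] [Module ℝ E]
    [FiniteDimensional ℝ E] (V W : ℂ ⊗[ℝ] E) :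
    RealIndexZero (Submodule.span ℂ ({V, W} : Set (ℂ ⊗[ℝ] E))) ↔
      ((CaseA V W ∧ ¬ CaseB V W ∧ ¬ CaseC V W) ∨
       (¬ CaseA V W ∧ CaseB V W ∧ ¬ CaseC V W) ∨
       (¬ CaseA V W ∧ ¬ CaseB V W ∧ CaseC V W)) := by
  constructor
  · intro hriz
    by_cases hA : CaseA V W
    · exact Or.inl ⟨hA, caseA_notB hA, caseA_notC hA⟩
    · by_cases hli : LinearIndependent ℂ ![V, W]
      · have hC : CaseC V W := ⟨hli, creal V, cimag V, creal W, cimag W, decomp V, decomp W,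
          li_four_of_riz hli hriz⟩
        exact Or.inr (Or.inr ⟨hA, fun hB => caseB_notC hB hC, hC⟩)
      · have hB : CaseB V W := by
          rcases eq_or_ne V 0 with hV | hV
          · have hW : W ≠ 0 := fun h => hA ⟨hV, h⟩
            have hspan : Submodule.span ℂ ({V, W} : Set (ℂ ⊗[ℝ] E)) =
                Submodule.span ℂ ({W} : Set (ℂ ⊗[ℝ] E)) := by
              rw [hV]; exact Submodule.span_insert_zero
            have hUmem : W ∈ Submodule.span ℂ ({V, W} : Set (ℂ ⊗[ℝ] E)) :=
              Submodule.subset_span (by simp)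
            have hli2 := li_pair_of_riz_singleton hUmem hW hriz
            refine ⟨by rw [hspan]; exact finrank_span_singleton hW,
              creal W, cimag W, hli2, ?_⟩
            rw [hspan, ← decomp W]
          · have hspan := span_pair_of_dep hV hli
            have hUmem : V ∈ Submodule.span ℂ ({V, W} : Set (ℂ ⊗[ℝ] E)) :=
              Submodule.subset_span (by simp)
            have hli2 := li_pair_of_riz_singleton hUmem hV hriz
            refine ⟨by rw [hspan]; exact finrank_span_singleton hV,
              creal V, cimag V, hli2, ?_⟩
            rw [hspan, ← decomp V]
        exact Or.inr (Or.inl ⟨hA, hB, fun hC => hli hC.1⟩)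
  · rintro (⟨hA, -, -⟩ | ⟨-, hB, -⟩ | ⟨-, -, hC⟩)
    · intro v hv _
      rw [hA.1, hA.2] at hv
      have hset : ({(0 : ℂ ⊗[ℝ] E), 0} : Set (ℂ ⊗[ℝ] E)) = {0} := by simp
      rw [hset, Submodule.span_zero_singleton, Submodule.mem_bot] at hv
      exact hv
    · obtain ⟨hfr, X', Z', hXZ, hspan⟩ := hB
      exact rizB hXZ hspan
    · obtain ⟨hli, X₁', Z₁', X₂', Z₂', hV, hW, h4⟩ := hC
      exact rizC h4 hV hW
end

section
/- Let E be a real vector space of dimension 2, let b : E × E → E be an ℝ-bilinear map, and let B be its complexification. Then the following are equivalent: (i) for every V = X + iZ ∈ E^c with X, Z ∈ E linearly independent over ℝ, B(V, V) lies in the complex line ℂ·V; (ii) there exists an ℝ-linear functional ν : E → ℝ such that b(X, Z) + b(Z, X) = ν(X)·Z + ν(Z)·X for all X, Z ∈ E. -/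
open TensorProduct Complex Submodule Module

section Aux

/-- Real part projection `ℂ ⊗ E → E`. -/
noncomputable def piRe (E : Type*) [AddCommGroup E] [Module ℝ E] : ℂ ⊗[ℝ] E →ₗ[ℝ] E :=
  TensorProduct.lift ((LinearMap.lsmul ℝ E).comp Complex.reLm)

/-- Imaginary part projection `ℂ ⊗ E → E`. -/
noncomputable def piIm (E : Type*) [AddCommGroup E] [Module ℝ E] : ℂ ⊗[ℝ] E →ₗ[ℝ] E :=
  TensorProduct.lift ((LinearMap.lsmul ℝ E).comp Complex.imLm)

variable {E : Type*} [AddCommGroup E] [Module ℝ E]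

@[simp] lemma piRe_tmul (z : ℂ) (x : E) : piRe E (z ⊗ₜ[ℝ] x) = z.re • x := rfl
@[simp] lemma piIm_tmul (z : ℂ) (x : E) : piIm E (z ⊗ₜ[ℝ] x) = z.im • x := rfl
@[simp] lemma piRe_cplIncl (x : E) : piRe E (cplIncl E x) = x := by
  simp [cplIncl]
@[simp] lemma piIm_cplIncl (x : E) : piIm E (cplIncl E x) = 0 := by
  simp [cplIncl]

@[simp] lemma piRe_I_smul (v : ℂ ⊗[ℝ] E) : piRe E (Complex.I • v) = - piIm E v := by
  induction v using TensorProduct.induction_on with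
  | zero => simp
  | tmul z x => rw [TensorProduct.smul_tmul', smul_eq_mul]; simp [Complex.mul_re]
  | add u w hu hw => rw [smul_add, map_add, map_add, hu, hw]; abel

@[simp] lemma piIm_I_smul (v : ℂ ⊗[ℝ] E) : piIm E (Complex.I • v) = piRe E v := by
  induction v using TensorProduct.induction_on with
  | zero => simp
  | tmul z x => rw [TensorProduct.smul_tmul', smul_eq_mul]; simp [Complex.mul_im]
  | add u w hu hw => rw [smul_add, map_add, map_add, hu, hw]

lemma repr_eq (v : ℂ ⊗[ℝ] E) :
    v = cplIncl E (piRe E v) + Complex.I • cplIncl E (piIm E v) := by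
  induction v using TensorProduct.induction_on with
  | zero => simp
  | tmul z x =>
    simp only [piRe_tmul, piIm_tmul, cplIncl, TensorProduct.mk_apply,
      TensorProduct.tmul_smul, TensorProduct.smul_tmul']
    rw [← TensorProduct.add_tmul]
    congr 1
    simp [Complex.ext_iff, Complex.real_smul]
  | add u w hu hw =>
    simp only [map_add, smul_add]
    conv_lhs => rw [hu, hw]
    abel

lemma cpl_ext {v w : ℂ ⊗[ℝ] E} (h1 : piRe E v = piRe E w) (h2 : piIm E v = piIm E w) :
    v = w := by rw [repr_eq v, repr_eq w, h1, h2]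

lemma complex_smul_decomp (c : ℂ) (v : ℂ ⊗[ℝ] E) :
    c • v = c.re • v + c.im • (Complex.I • v) := by
  conv_lhs => rw [← Complex.re_add_im c]
  rw [add_smul, mul_smul]
  norm_cast

@[simp] lemma piRe_csmul (c : ℂ) (v : ℂ ⊗[ℝ] E) :
    piRe E (c • v) = c.re • piRe E v - c.im • piIm E v := by
  rw [complex_smul_decomp, map_add, map_smul, map_smul, piRe_I_smul, smul_neg]
  exact (sub_eq_add_neg _ _).symm

@[simp] lemma piIm_csmul (c : ℂ) (v : ℂ ⊗[ℝ] E) :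
    piIm E (c • v) = c.im • piRe E v + c.re • piIm E v := by
  rw [complex_smul_decomp, map_add, map_smul, map_smul, piIm_I_smul]
  exact add_comm _ _

lemma exists_indep_pair (hdim : finrank ℝ E = 2) (Z : E) (hZ : Z ≠ 0) :
    ∃ X, LinearIndependent ℝ ![X, Z] := by
  have hsp : (span ℝ {Z} : Submodule ℝ E) ≠ ⊤ := by
    intro h
    have h1 : finrank ℝ (span ℝ {Z} : Submodule ℝ E) = 1 := finrank_span_singleton hZ
    rw [h, finrank_top, hdim] at h1
    norm_num at h1
  obtain ⟨X, hX⟩ : ∃ X, X ∉ (span ℝ {Z} : Submodule ℝ E) := by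
    by_contra h
    push_neg at h
    exact hsp (eq_top_iff.mpr fun x _ => h x)
  refine ⟨X, linearIndependent_fin2.mpr ⟨?_, fun a ha => hX ?_⟩⟩
  · simpa using hZ
  · simp only [Matrix.cons_val_one, Matrix.head_cons, Matrix.cons_val_zero] at ha
    exact ha ▸ smul_mem _ a (mem_span_singleton_self Z)

lemma dep_pair {X Z : E} (h : ¬ LinearIndependent ℝ ![X, Z]) : Z = 0 ∨ ∃ a : ℝ, a • Z = X := by
  rw [linearIndependent_fin2] at h
  push_neg at h
  simp only [Matrix.cons_val_one, Matrix.head_cons, Matrix.cons_val_zero] at h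
  by_cases hZ : Z = 0
  · exact Or.inl hZ
  · exact Or.inr (h hZ)

lemma indep_two_smul {X Z : E} (h : LinearIndependent ℝ ![X, Z]) :
    LinearIndependent ℝ ![X, (2:ℝ) • Z] := by
  rw [linearIndependent_fin2] at h ⊢
  simp only [Matrix.cons_val_one, Matrix.head_cons, Matrix.cons_val_zero] at h ⊢
  refine ⟨smul_ne_zero two_ne_zero h.1, fun a ha => h.2 (a * 2) ?_⟩
  rw [mul_smul]
  exact ha

lemma coeff_uniq {X Z : E} (h : LinearIndependent ℝ ![X, Z]) {a b a' b' : ℝ}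
    (hh : a • X + b • Z = a' • X + b' • Z) : a = a' ∧ b = b' := by
  rw [LinearIndependent.pair_iff] at h
  have := h (a - a') (b - b')
    (by rw [sub_smul, sub_smul]; rw [← sub_eq_zero] at hh; linear_combination (norm := module) hh)
  exact ⟨by linarith [this.1], by linarith [this.2]⟩

end Aux

/-- For `dim_ℝ E = 2`, an `ℝ`-bilinear map `b : E × E → E` with complexification `B`:
`B(V,V) ∈ ℂ·V` for every `V = X + iZ` with `X, Z` `ℝ`-independent iff
`b(X,Z) + b(Z,X) = ν(X)·Z + ν(Z)·X` for some `ℝ`-linear functional `ν`. -/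
theorem bilinear_diag_in_line_iff_dim_two
    (E : Type*) [AddCommGroup E] [Module ℝ E] [FiniteDimensional ℝ E]
    (hdim : finrank ℝ E = 2)
    (b : E →ₗ[ℝ] E →ₗ[ℝ] E)
    (B : ℂ ⊗[ℝ] E →ₗ[ℂ] ℂ ⊗[ℝ] E →ₗ[ℂ] ℂ ⊗[ℝ] E)
    (hB : ∀ x y : E, B (cplIncl E x) (cplIncl E y) = cplIncl E (b x y)) :
    (∀ X Z : E, LinearIndependent ℝ ![X, Z] →
        ∃ c : ℂ, B (cplIncl E X + Complex.I • cplIncl E Z)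
            (cplIncl E X + Complex.I • cplIncl E Z) =
          c • (cplIncl E X + Complex.I • cplIncl E Z)) ↔
      (∃ ν : E →ₗ[ℝ] ℝ, ∀ X Z : E, b X Z + b Z X = ν X • Z + ν Z • X) := by
  -- Expansion of `B(V,V)` for `V = X + iZ`.
  have hexp : ∀ X Z : E,
      B (cplIncl E X + Complex.I • cplIncl E Z) (cplIncl E X + Complex.I • cplIncl E Z)
        = cplIncl E (b X X - b Z Z) + Complex.I • cplIncl E (b X Z + b Z X) := by
    intro X Z
    simp only [map_add, map_smul, LinearMap.add_apply, LinearMap.smul_apply, hB, map_sub]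
    simp only [smul_add, smul_smul, Complex.I_mul_I, neg_one_smul]
    abel
  constructor
  · -- forward direction
    intro h
    -- translate the hypothesis into real coefficients
    have key : ∀ X Z : E, LinearIndependent ℝ ![X, Z] → ∃ α β : ℝ,
        b X X - b Z Z = α • X - β • Z ∧ b X Z + b Z X = β • X + α • Z := by
      intro X Z hXZ
      obtain ⟨c, hc⟩ := h X Z hXZ
      rw [hexp] at hc
      refine ⟨c.re, c.im, ?_, ?_⟩
      · have h1 := congrArg (piRe E) hc
        simpa [sub_eq_add_neg] using h1
      · have h2 := congrArg (piIm E) hc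
        simpa using h2
    -- Step 1: b Z Z is proportional to Z for every Z
    have hq : ∀ Z : E, ∃ r : ℝ, b Z Z = r • Z ∧ (Z = 0 → r = 0) := by
      intro Z
      by_cases hZ : Z = 0
      · exact ⟨0, by simp [hZ], fun _ => rfl⟩
      obtain ⟨X, hXZ⟩ := exists_indep_pair hdim Z hZ
      have hXZ2 := indep_two_smul hXZ
      obtain ⟨α, β, e1, e2⟩ := key X Z hXZ
      obtain ⟨α₂, β₂, e3, e4⟩ := key X ((2:ℝ) • Z) hXZ2
      have l2 : b X ((2:ℝ) • Z) + b ((2:ℝ) • Z) X = (2:ℝ) • (b X Z + b Z X) := by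
        simp only [map_smul, LinearMap.smul_apply, smul_add]
      have l1 : b ((2:ℝ) • Z) ((2:ℝ) • Z) = (4:ℝ) • b Z Z := by
        simp only [map_smul, LinearMap.smul_apply, smul_smul]
        norm_num
      rw [l2, e2] at e4
      rw [l1] at e3
      -- e4 : 2 • (β • X + α • Z) = β₂ • X + α₂ • (2 • Z)
      have e4' : ((2:ℝ) * β) • X + ((2:ℝ) * α) • Z = β₂ • X + ((2:ℝ) * α₂) • Z := by
        linear_combination (norm := module) e4
      obtain ⟨hb2, ha2⟩ := coeff_uniq hXZ e4'
      have hα : α₂ = α := by linarith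
      refine ⟨β, ?_, fun hc => absurd hc hZ⟩
      -- from e1, e3 : 3 • qZ = 3β • Z
      have h3 : (3:ℝ) • b Z Z = ((3:ℝ) * β) • Z := by
        rw [hα, ← hb2] at e3
        linear_combination (norm := module) e1 - e3
      have := smul_right_injective E (by norm_num : (3:ℝ) ≠ 0)
        (by rw [h3, smul_smul] : (3:ℝ) • b Z Z = (3:ℝ) • (β • Z))
      exact this
    choose ν hν hν0 using hq
    -- uniqueness of the ratio
    have huniq : ∀ (Z : E), Z ≠ 0 → ∀ r : ℝ, b Z Z = r • Z → r = ν Z := by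
      intro Z hZ r hr
      exact smul_left_injective ℝ hZ (hr.symm.trans (hν Z))
    -- homogeneity
    have hhom : ∀ (t : ℝ) (Z : E), ν (t • Z) = t * ν Z := by
      intro t Z
      by_cases hZ : Z = 0
      · simp [hZ, hν0 _ rfl, smul_zero]
      by_cases ht : t = 0
      · simp [ht, hν0 _ rfl]
      have htZ : t • Z ≠ 0 := smul_ne_zero ht hZ
      have : b (t • Z) (t • Z) = (t * ν Z) • (t • Z) := by
        simp only [map_smul, LinearMap.smul_apply, smul_smul, hν]
        module
      exact (huniq _ htZ _ this).symm
    -- the s-formula for independent pairs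
    have key2 : ∀ X Z : E, LinearIndependent ℝ ![X, Z] →
        b X Z + b Z X = ν Z • X + ν X • Z := by
      intro X Z hXZ
      obtain ⟨α, β, e1, e2⟩ := key X Z hXZ
      rw [hν X, hν Z] at e1
      have e1' : ν X • X + (-(ν Z)) • Z = α • X + (-β) • Z := by
        linear_combination (norm := module) e1
      obtain ⟨ha, hb⟩ := coeff_uniq hXZ e1'
      rw [e2, ← ha, show β = ν Z by linarith]
    -- additivity
    have hadd : ∀ X Y : E, ν (X + Y) = ν X + ν Y := by
      intro X Y
      by_cases hi : LinearIndependent ℝ ![X, Y]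
      · have hne : X + Y ≠ 0 := by
          rw [LinearIndependent.pair_iff] at hi
          intro hc
          have := hi 1 1 (by simpa using hc)
          norm_num at this
        have hsum : b (X + Y) (X + Y) = (ν X + ν Y) • (X + Y) := by
          have hk := key2 X Y hi
          simp only [map_add, LinearMap.add_apply]
          rw [hν X, hν Y]
          linear_combination (norm := module) hk
        exact (huniq _ hne _ hsum).symm
      · rcases dep_pair hi with hY | ⟨a, ha⟩
        · simp [hY, hν0 _ rfl]
        · subst ha
          have hrw : a • Y + Y = (a + 1) • Y := by rw [add_smul, one_smul]
          rw [hrw, hhom, hhom]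
          ring
    -- assemble the linear map
    refine ⟨{ toFun := ν, map_add' := hadd, map_smul' := fun t Z => hhom t Z }, ?_⟩
    intro X Z
    simp only [LinearMap.coe_mk, AddHom.coe_mk]
    by_cases hi : LinearIndependent ℝ ![X, Z]
    · rw [key2 X Z hi]
      abel
    · rcases dep_pair hi with hZ | ⟨a, ha⟩
      · simp [hZ, hν0 _ rfl]
      · subst ha
        simp only [map_smul, LinearMap.smul_apply, hhom]
        rw [hν Z]
        simp only [smul_smul]
        module
  · -- backward direction
    rintro ⟨ν, hνp⟩ X Z _
    have hqX : ∀ W : E, b W W = ν W • W := by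
      intro W
      have := hνp W W
      have h2 : (2:ℝ) • b W W = (2:ℝ) • (ν W • W) := by
        rw [two_smul, two_smul]
        exact this
      exact smul_right_injective E (by norm_num : (2:ℝ) ≠ 0) h2
    refine ⟨⟨ν X, ν Z⟩, ?_⟩
    rw [hexp]
    apply cpl_ext
    · simp only [map_add, piRe_cplIncl, piRe_I_smul, piIm_cplIncl, piRe_csmul, piIm_csmul,
        piIm_I_smul, Complex.I_re, Complex.I_im, zero_smul, one_smul, smul_zero, add_zero,
        neg_zero, sub_zero, zero_add]
      rw [hqX X, hqX Z]
    · simp only [map_add, piRe_cplIncl, piRe_I_smul, piIm_cplIncl, piRe_csmul, piIm_csmul,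
        piIm_I_smul, Complex.I_re, Complex.I_im, zero_smul, one_smul, smul_zero, add_zero,
        neg_zero, sub_zero, zero_add]
      rw [hνp X Z]
      exact add_comm _ _
end

section
/- Let E be a real vector space of even dimension 2q ≥ 2 and let A : E → E be an ℝ-linear endomorphism that commutes with every complex structure on E, i.e., A ∘ J = J ∘ A for every ℝ-linear J : E → E with J² = −Id. Then A = c·Id_E for some real number c. -/
open Module

private lemma aux_pair {E : Type*} [AddCommGroup E] [Module ℝ E] {x y : E}
    (hx : x ≠ 0) (hy : ∀ a : ℝ, y ≠ a • x) : LinearIndependent ℝ ![x, y] := by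
  rw [LinearIndependent.pair_iff]
  intro s t hst
  by_cases ht : t = 0
  · subst ht
    simp only [zero_smul, add_zero, smul_eq_zero] at hst
    exact ⟨hst.resolve_right hx, rfl⟩
  · exfalso
    apply hy (-s / t)
    have h' : t • y = (-s) • x := by
      rw [neg_smul, eq_neg_iff_add_eq_zero, add_comm]; exact hst
    have h2 := congrArg (fun z => (t⁻¹ : ℝ) • z) h'
    simp only [smul_smul] at h2
    rw [inv_mul_cancel₀ ht, one_smul] at h2
    rw [div_eq_inv_mul]
    exact h2

private lemma exists_adapted_basis {E : Type*} [AddCommGroup E] [Module ℝ E] [FiniteDimensional ℝ E]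
    {q : ℕ} (hq : 1 ≤ q) (hdim : finrank ℝ E = 2 * q) {v w : E}
    (hvw : LinearIndependent ℝ ![v, w]) :
    ∃ b : Basis (Fin q × Bool) ℝ E, b (⟨0, hq⟩, false) = v ∧ b (⟨0, hq⟩, true) = w := by
  have hs : LinearIndepOn ℝ id (Set.range ![v, w]) :=
    hvw.linearIndepOn_id
  set t := hs.extend (Set.subset_univ _) with ht
  let bt : Basis t ℝ E := Module.Basis.extend hs
  have : Fintype t := FiniteDimensional.fintypeBasisIndex bt
  have hcard : Fintype.card t = 2 * q := by
    rw [← finrank_eq_card_basis bt, hdim]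
  have hvmem : v ∈ t := hs.subset_extend _ ⟨0, rfl⟩
  have hwmem : w ∈ t := hs.subset_extend _ ⟨1, rfl⟩
  have hne : v ≠ w := by
    intro hvweq
    have := hvw.injective (by simp [hvweq] : ![v, w] 0 = ![v, w] 1)
    simp at this
  set vt : t := ⟨v, hvmem⟩
  set wt : t := ⟨w, hwmem⟩
  have hnet : vt ≠ wt := by simpa [vt, wt, Subtype.ext_iff] using hne
  have hcard' : Fintype.card (Fin q × Bool) = Fintype.card t := by
    simp [hcard]; ring
  let e0 : (Fin q × Bool) ≃ t := Fintype.equivOfCardEq hcard'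
  set p0 : Fin q × Bool := (⟨0, hq⟩, false)
  set p1 : Fin q × Bool := (⟨0, hq⟩, true)
  have hp01 : p0 ≠ p1 := by simp [p0, p1]
  let e1 : (Fin q × Bool) ≃ t := (Equiv.swap p0 (e0.symm vt)).trans e0
  have he1 : e1 p0 = vt := by simp [e1]
  let e2 : (Fin q × Bool) ≃ t := (Equiv.swap p1 (e1.symm wt)).trans e1
  have he2w : e2 p1 = wt := by simp [e2]
  have he2v : e2 p0 = vt := by
    have h1 : p0 ≠ e1.symm wt := by
      intro hc
      apply hnet
      rw [← he1, hc, Equiv.apply_symm_apply]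
    simp [e2, Equiv.swap_apply_of_ne_of_ne hp01 h1, he1]
  refine ⟨bt.reindex e2.symm, ?_, ?_⟩
  · rw [Basis.reindex_apply]
    simp only [Equiv.symm_symm]
    rw [he2v]
    exact Basis.extend_apply_self hs vt
  · rw [Basis.reindex_apply]
    simp only [Equiv.symm_symm]
    rw [he2w]
    exact Basis.extend_apply_self hs wt

private lemma key {E : Type*} [AddCommGroup E] [Module ℝ E] [FiniteDimensional ℝ E]
    {q : ℕ} (hq : 1 ≤ q) (hdim : finrank ℝ E = 2 * q)
    (A : Module.End ℝ E)
    (h : ∀ J : Module.End ℝ E, J * J = -1 → A * J = J * A)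
    (v : E) (hvw : LinearIndependent ℝ ![v, A v]) : False := by
  set w := A v with hw
  obtain ⟨b, hb0, hb1⟩ := exists_adapted_basis hq hdim hvw
  set i0 : Fin q := ⟨0, hq⟩
  set p0 : Fin q × Bool := (i0, false)
  set p1 : Fin q × Bool := (i0, true)
  -- standard complex structure
  let g : Fin q × Bool → E := fun p => if p.2 then -b (p.1, false) else b (p.1, true)
  let J : Module.End ℝ E := b.constr ℝ g
  have hJb : ∀ p, J (b p) = g p := fun p => b.constr_basis ℝ g p
  have hJ : J * J = -1 := by
    apply b.ext
    rintro ⟨i, bb⟩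
    rcases bb with _ | _ <;>
      simp [Module.End.mul_apply, hJb, g]
  -- perturbed complex structure
  let g' : Fin q × Bool → E := fun p =>
    if p = p0 then v + w else if p = p1 then -((2:ℝ) • v) - w else g p
  let J' : Module.End ℝ E := b.constr ℝ g'
  have hJ'b : ∀ p, J' (b p) = g' p := fun p => b.constr_basis ℝ g' p
  have hg'0 : g' p0 = v + w := by simp [g']
  have hg'1 : g' p1 = -((2:ℝ) • v) - w := by
    simp [g', p0, p1]
  have hJ'v : J' v = v + w := by rw [← hb0, hJ'b, hg'0, hb0]
  have hJ'w : J' w = -((2:ℝ) • v) - w := by rw [← hb1, hJ'b, hg'1, hb1]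
  have hJ' : J' * J' = -1 := by
    apply b.ext
    rintro ⟨i, bb⟩
    by_cases hi : i = i0
    · subst hi
      rcases bb with _ | _
      · -- p = p0
        have : (((⟨0, hq⟩ : Fin q), false) : Fin q × Bool) = p0 := rfl
        rw [Module.End.mul_apply, hJ'b]
        rw [this, hg'0, map_add, hJ'v, hJ'w]
        simp only [hb0, two_smul]
        abel_nf
        try simp [hb0]
      · rw [Module.End.mul_apply, hJ'b]
        have : (((⟨0, hq⟩ : Fin q), true) : Fin q × Bool) = p1 := rfl
        rw [this, hg'1, map_sub, map_neg, map_smul, hJ'v, hJ'w]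
        simp only [hb1, two_smul]
        abel_nf
        try simp [hb1]
    · have hne0 : ((i, bb) : Fin q × Bool) ≠ p0 := by simp [p0, hi]
      have hne1 : ((i, bb) : Fin q × Bool) ≠ p1 := by simp [p1, hi]
      have hgf : g' (i, false) = b (i, true) := by simp [g', p0, p1, hi, g]
      have hgt : g' (i, true) = -b (i, false) := by simp [g', p0, p1, hi, g]
      rcases bb with _ | _
      · rw [Module.End.mul_apply, hJ'b, hgf, hJ'b, hgt]
        simp
      · rw [Module.End.mul_apply, hJ'b, hgt, map_neg, hJ'b, hgf]
        simp
  -- use the commutation hypothesis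
  have hJv : J v = w := by rw [← hb0, hJb]; simp [g, p0]; rw [hb1]
  have hJw : J w = -v := by rw [← hb1, hJb]; simp [g, p1]; rw [hb0]
  have h1 : A w = -v := by
    have := congrArg (fun f : Module.End ℝ E => f v) (h J hJ)
    simp only [Module.End.mul_apply] at this
    rw [hJv, ← hw, hJw] at this
    exact this
  have h2 : A v + A w = -((2:ℝ) • v) - w := by
    have := congrArg (fun f : Module.End ℝ E => f v) (h J' hJ')
    simp only [Module.End.mul_apply] at this
    rw [hJ'v, ← hw, hJ'w, map_add] at this
    exact this
  rw [h1, ← hw] at h2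
  -- w - v = -2v - w  ⟹ v + 2w = 0
  have h3 : (1:ℝ) • v + (2:ℝ) • w = 0 := by
    linear_combination (norm := module) h2
  obtain ⟨hc1, _⟩ := LinearIndependent.pair_iff.mp hvw 1 2 h3
  exact one_ne_zero hc1

/-- If `dim_ℝ E = 2q ≥ 2` and an `ℝ`-linear endomorphism `A` of `E` commutes with every
complex structure `J` on `E` (`J² = −Id`), then `A = c·Id` for some `c ∈ ℝ`. -/
theorem commutes_with_all_complex_structures
    (E : Type*) [AddCommGroup E] [Module ℝ E] [FiniteDimensional ℝ E]
    (q : ℕ) (hq : 1 ≤ q) (hdim : finrank ℝ E = 2 * q)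
    (A : Module.End ℝ E)
    (h : ∀ J : Module.End ℝ E, J * J = -1 → A * J = J * A) :
    ∃ c : ℝ, A = c • (1 : Module.End ℝ E) := by
  -- every vector is an eigenvector
  have heig : ∀ x : E, ∃ c : ℝ, A x = c • x := by
    intro x
    by_cases hx : x = 0
    · exact ⟨0, by simp [hx]⟩
    by_contra hc
    push_neg at hc
    refine key hq hdim A h x (aux_pair hx fun a ha => hc a ha)
  -- E is nontrivial
  have hpos : 0 < finrank ℝ E := by omega
  have : Nontrivial E := Module.nontrivial_of_finrank_pos hpos
  obtain ⟨v, hv⟩ := exists_ne (0 : E)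
  obtain ⟨c, hcv⟩ := heig v
  refine ⟨c, LinearMap.ext fun x => ?_⟩
  simp only [LinearMap.smul_apply, Module.End.one_apply]
  by_cases hx : ∃ a : ℝ, x = a • v
  · obtain ⟨a, rfl⟩ := hx
    rw [map_smul, hcv, smul_comm]
  · have hind : LinearIndependent ℝ ![v, x] :=
      aux_pair hv fun a ha => hx ⟨a, ha⟩
    obtain ⟨d, hd⟩ := heig x
    obtain ⟨e, he⟩ := heig (v + x)
    rw [map_add, hcv, hd, smul_add] at he
    have h0 : (c - e) • v + (d - e) • x = 0 := by
      rw [sub_smul, sub_smul]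
      rw [← sub_eq_zero] at he
      linear_combination (norm := module) he
    obtain ⟨h1, h2⟩ := LinearIndependent.pair_iff.mp hind _ _ h0
    have : c = e := by linarith [sub_eq_zero.mp (by linarith : c - e = (0:ℝ))]
    have : d = e := sub_eq_zero.mp h2
    rw [hd]
    congr 1
    have hce : c = e := sub_eq_zero.mp h1
    rw [hce, this]
end

section
/- Let N be a real vector space of dimension 2q with q ≥ 2 and let r : N × N × N → N be an ℝ-trilinear map of the form r(X, Y, Z) = β(X, Z)·Y − β(Y, Z)·X + γ(X, Y)·Z, where β is an ℝ-bilinear form and γ is an antisymmetric ℝ-bilinear form on N. Then, for all X, Y ∈ N: sym β(X, Y) = −(1/(2q − 1))·sym Ric_r(X, Y), alt β(X, Y) = −(1/(2q² − q − 1))·(q·alt Ric_r(X, Y) + (1/2)·tr r(X, Y)), and γ(X, Y) = (1/(2q² − q − 1))·(alt Ric_r(X, Y) + ((2q − 1)/2)·tr r(X, Y)). -/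
open Module

lemma trace_smulRight_aux (N : Type*) [AddCommGroup N] [Module ℝ N] [FiniteDimensional ℝ N]
    (f : N →ₗ[ℝ] ℝ) (v : N) : LinearMap.trace ℝ N (f.smulRight v) = f v := by
  have : f.smulRight v = dualTensorHom ℝ N N (f ⊗ₜ v) := by ext x; simp
  rw [this, LinearMap.trace_eq_contract_apply]; simp

/-- If `dim_ℝ N = 2q`, `q ≥ 2`, and the `ℝ`-trilinear map
`r(X,Y,Z) = β(X,Z)·Y − β(Y,Z)·X + γ(X,Y)·Z` with `γ` antisymmetric, then `β` and `γ` are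
determined by the traces `tr r(X,Y) = tr (Z ↦ r(X,Y,Z))` and
`Ric_r(X,Y) = tr (Z ↦ r(Z,X,Y))` via the stated formulas. -/
theorem curvature_coeffs_eq_traces
    (N : Type*) [AddCommGroup N] [Module ℝ N] [FiniteDimensional ℝ N]
    (q : ℕ) (hq : 2 ≤ q) (hdim : finrank ℝ N = 2 * q)
    (r : N →ₗ[ℝ] N →ₗ[ℝ] N →ₗ[ℝ] N)
    (β γ : N →ₗ[ℝ] N →ₗ[ℝ] ℝ) (hγ : ∀ X Y : N, γ X Y = - γ Y X)
    (h : ∀ X Y Z : N, r X Y Z = β X Z • Y - β Y Z • X + γ X Y • Z) :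
    ∀ X Y : N,
      (β X Y + β Y X) / 2 =
        -(1 / (2 * (q : ℝ) - 1)) *
          ((LinearMap.trace ℝ N ((r.flip X).flip Y)
            + LinearMap.trace ℝ N ((r.flip Y).flip X)) / 2) ∧
      (β X Y - β Y X) / 2 =
        -(1 / (2 * (q : ℝ) ^ 2 - (q : ℝ) - 1)) *
          ((q : ℝ) * ((LinearMap.trace ℝ N ((r.flip X).flip Y)
              - LinearMap.trace ℝ N ((r.flip Y).flip X)) / 2)
            + (1 / 2) * LinearMap.trace ℝ N (r X Y)) ∧
      γ X Y =
        (1 / (2 * (q : ℝ) ^ 2 - (q : ℝ) - 1)) *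
          ((LinearMap.trace ℝ N ((r.flip X).flip Y)
              - LinearMap.trace ℝ N ((r.flip Y).flip X)) / 2
            + ((2 * (q : ℝ) - 1) / 2) * LinearMap.trace ℝ N (r X Y)) := by
  have hq' : (2 : ℝ) ≤ (q : ℝ) := by exact_mod_cast hq
  have hd1 : (2 * (q : ℝ) - 1) ≠ 0 := by nlinarith
  have hd2 : (2 * (q : ℝ) ^ 2 - (q : ℝ) - 1) ≠ 0 := by nlinarith
  have hT : ∀ X Y : N, LinearMap.trace ℝ N (r X Y)
      = β X Y - β Y X + 2 * (q : ℝ) * γ X Y := by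
    intro X Y
    have e : r X Y = (β X).smulRight Y - (β Y).smulRight X + γ X Y • LinearMap.id := by
      ext Z; simpa using h X Y Z
    rw [e, map_add, map_sub, map_smul, trace_smulRight_aux, trace_smulRight_aux,
      LinearMap.trace_id, hdim]
    simp only [smul_eq_mul]
    push_cast
    ring
  have hR : ∀ X Y : N, LinearMap.trace ℝ N ((r.flip X).flip Y)
      = (1 - 2 * (q : ℝ)) * β X Y - γ X Y := by
    intro X Y
    have e : (r.flip X).flip Y
        = (β.flip Y).smulRight X - β X Y • LinearMap.id + (γ.flip X).smulRight Y := by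
      ext Z; simpa using h Z X Y
    rw [e, map_add, map_sub, map_smul, trace_smulRight_aux, trace_smulRight_aux,
      LinearMap.trace_id, hdim]
    simp only [LinearMap.flip_apply]
    rw [hγ Y X]
    simp only [smul_eq_mul]
    push_cast
    ring
  intro X Y
  rw [hT X Y, hR X Y, hR Y X, hγ Y X]
  refine ⟨?_, ?_, ?_⟩ <;> (generalize hD : (2 * (q : ℝ) ^ 2 - (q : ℝ) - 1) = D at hd2 ⊢; field_simp; subst hD; ring)
end

section
/- Let N be a real vector space of dimension 2q with q ≥ 2 and let r : N × N × N → N be an ℝ-trilinear map, antisymmetric in its first two arguments, satisfying the first Bianchi identity r(X, Y, Z) + r(Y, Z, X) + r(Z, X, Y) = 0 for all X, Y, Z ∈ N, and of the form r(X, Y, Z) = β(X, Z)·Y − β(Y, Z)·X + γ(X, Y)·Z with β an ℝ-bilinear form and γ an antisymmetric ℝ-bilinear form on N. Then γ(X, Y) = β(X, Y) − β(Y, X) for all X, Y ∈ N. -/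
open Module

/-- If `dim_ℝ N = 2q`, `q ≥ 2`, and the `ℝ`-trilinear map `r`, antisymmetric in its first
two arguments, satisfies the first Bianchi identity and has the form
`r(X,Y,Z) = β(X,Z)·Y − β(Y,Z)·X + γ(X,Y)·Z` with `γ` antisymmetric, then
`γ(X,Y) = β(X,Y) − β(Y,X)`. -/
theorem gamma_eq_alt_beta_of_bianchi
    (N : Type*) [AddCommGroup N] [Module ℝ N] [FiniteDimensional ℝ N]
    (q : ℕ) (hq : 2 ≤ q) (hdim : finrank ℝ N = 2 * q)
    (r : N →ₗ[ℝ] N →ₗ[ℝ] N →ₗ[ℝ] N) (hanti : ∀ X Y : N, r X Y = - r Y X)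
    (hbianchi : ∀ X Y Z : N, r X Y Z + r Y Z X + r Z X Y = 0)
    (β γ : N →ₗ[ℝ] N →ₗ[ℝ] ℝ) (hγ : ∀ X Y : N, γ X Y = - γ Y X)
    (h : ∀ X Y Z : N, r X Y Z = β X Z • Y - β Y Z • X + γ X Y • Z) :
    ∀ X Y : N, γ X Y = β X Y - β Y X := by
  intro X Y
  by_contra hne
  set c : ℝ := γ X Y - (β X Y - β Y X) with hc
  have hc0 : c ≠ 0 := sub_ne_zero.mpr hne
  -- find Z outside the span of {X, Y}
  have hex : ∃ Z : N, Z ∉ Submodule.span ℝ ({X, Y} : Set N) := by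
    by_contra hall
    push_neg at hall
    have htop : Submodule.span ℝ ({X, Y} : Set N) = ⊤ :=
      Submodule.eq_top_iff'.mpr hall
    have hle : finrank ℝ N ≤ 2 := by
      classical
      have h1 := finrank_span_le_card (R := ℝ) ({X, Y} : Set N)
      rw [htop, finrank_top] at h1
      have h2 : ({X, Y} : Set N).toFinset.card ≤ 2 := by
        rw [Set.toFinset_insert, Set.toFinset_singleton]
        exact (Finset.card_insert_le _ _).trans (by simp)
      omega
    omega
  obtain ⟨Z, hZ⟩ := hex
  have hb := hbianchi X Y Z
  rw [h X Y Z, h Y Z X, h Z X Y] at hb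
  have key : c • Z + (γ Y Z + β Z Y - β Y Z) • X + (β X Z - β Z X + γ Z X) • Y = 0 := by
    rw [hc]
    linear_combination (norm := module) hb
  apply hZ
  have hZeq : Z = c⁻¹ • (-((γ Y Z + β Z Y - β Y Z) • X + (β X Z - β Z X + γ Z X) • Y)) := by
    have : c • Z = -((γ Y Z + β Z Y - β Y Z) • X + (β X Z - β Z X + γ Z X) • Y) := by
      linear_combination (norm := module) key
    rw [← this, smul_smul, inv_mul_cancel₀ hc0, one_smul]
  rw [hZeq]
  apply Submodule.smul_mem
  apply Submodule.neg_mem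
  apply Submodule.add_mem
  · exact Submodule.smul_mem _ _ (Submodule.subset_span (by simp))
  · exact Submodule.smul_mem _ _ (Submodule.subset_span (by simp))
end
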